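/- Let A be a left R-module with projective presentation σ_A: P₁ → P₀ and B a left S-module with projective presentation σ_B: Q₁ → Q₀, and let σ be the induced projective presentation of (0,B) ⊕ (A,FA) in the comma category (F, S-Mod). Then an object (M,N)_h of (F, S-Mod) belongs to D_σ if and only if M belongs to D_{σ_A} and N belongs to D_{σ_B}. -/

import Mathlib

open CategoryTheory CategoryTheory.Limits

universe v u

section Generic

variable {𝒜 : Type*} [Category.{v} 𝒜]

/-- For a morphism `σ : P₁ ⟶ P₀`, the class `D_σ` of objects `X` such that
`Hom(σ, X)` is surjective. -/
def Dclass {P₁ P₀ : 𝒜} (σ : P₁ ⟶ P₀) : Set 𝒜 :=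
  {X | ∀ g : P₁ ⟶ X, ∃ h : P₀ ⟶ X, σ ≫ h = g}

/-- `Gen T` is the class of objects admitting an epimorphism from a coproduct (direct sum)
of copies of `T`. -/
def Gen (T : 𝒜) : Set 𝒜 :=
  {X | ∃ (ι : Type v) (c : Cofan (fun _ : ι => T)) (_ : IsColimit c) (f : c.pt ⟶ X), Epi f}

variable [HasZeroMorphisms 𝒜]

/-- A projective presentation `P₁ → P₀ → T → 0` of an object `T`. -/
structure ProjPres (T : 𝒜) where
  P₁ : 𝒜
  P₀ : 𝒜
  σ : P₁ ⟶ P₀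
  π : P₀ ⟶ T
  projective₁ : Projective P₁
  projective₀ : Projective P₀
  epi : Epi π
  w : σ ≫ π = 0
  exact : (ShortComplex.mk σ π w).Exact

/-- A class of objects is a torsion class if it is closed under (epimorphic) images,
direct sums (coproducts) and extensions. -/
def IsTorsionClass (𝒞 : Set 𝒜) : Prop :=
  (∀ ⦃X Y : 𝒜⦄ (f : X ⟶ Y), Epi f → X ∈ 𝒞 → Y ∈ 𝒞) ∧
  (∀ (ι : Type v) (Xs : ι → 𝒜) (c : Cofan Xs), IsColimit c → (∀ i, Xs i ∈ 𝒞) → c.pt ∈ 𝒞) ∧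
  (∀ (E : ShortComplex 𝒜), E.ShortExact → E.X₁ ∈ 𝒞 → E.X₃ ∈ 𝒞 → E.X₂ ∈ 𝒞)

/-- `T` is a silting object (with respect to some projective presentation) if it admits a
projective presentation `σ` with `D_σ = Gen T`. -/
def IsSilting (T : 𝒜) : Prop :=
  ∃ p : ProjPres T, Dclass p.σ = Gen T

/-- `T` is a partial silting object if it admits a projective presentation `σ` such that
`D_σ` is a torsion class and `T ∈ D_σ`. -/
def IsPartialSilting (T : 𝒜) : Prop :=
  ∃ p : ProjPres T, IsTorsionClass (Dclass p.σ) ∧ T ∈ Dclass p.σ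

end Generic

section CommaZero

variable {𝒜 : Type*} [Category 𝒜] {ℬ : Type*} [Category ℬ]
  [Preadditive 𝒜] [Preadditive ℬ] (F : 𝒜 ⥤ ℬ) [F.Additive]

instance : HasZeroMorphisms (Comma F (𝟭 ℬ)) where
  zero X Y := ⟨{ left := 0, right := 0, w := by simp }⟩
  comp_zero {X Y} f Z := by
    apply CommaMorphism.ext
    · show f.left ≫ 0 = 0
      simp
    · show f.right ≫ 0 = 0
      simp
  zero_comp X {Y Z} f := by
    apply CommaMorphism.ext
    · show 0 ≫ f.left = 0
      simp
    · show 0 ≫ f.right = 0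
      simp

end CommaZero

section ModComma

variable {R S : Type u} [Ring R] [Ring S]
  (F : ModuleCat.{u} R ⥤ ModuleCat.{u} S) [F.Additive]

/-- The object `(P, FP ⊕ Q)` of the comma category `(F, S-Mod)`, with structure map
`(1,0) : FP ⟶ FP ⊕ Q`; it is isomorphic to `(P, FP) ⊕ (0, Q)`. -/
def pairObj (P : ModuleCat.{u} R) (Q : ModuleCat.{u} S) :
    Comma F (𝟭 (ModuleCat.{u} S)) where
  left := P
  right := ModuleCat.of S (F.obj P × Q)
  hom := ModuleCat.ofHom (LinearMap.inl S (F.obj P) Q)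

/-- The morphism `(a, Fa ⊕ b) : (P₁, FP₁ ⊕ Q₁) ⟶ (P₀, FP₀ ⊕ Q₀)` in the comma
category `(F, S-Mod)`.  When `a = σ_A`, `b = σ_B` are projective presentations of `A` and
`B`, this is the induced projective presentation `σ` of `(0,B) ⊕ (A, FA)`. -/
def pairMap {P₁ P₀ : ModuleCat.{u} R} {Q₁ Q₀ : ModuleCat.{u} S}
    (a : P₁ ⟶ P₀) (b : Q₁ ⟶ Q₀) : pairObj F P₁ Q₁ ⟶ pairObj F P₀ Q₀ where
  left := a
  right := ModuleCat.ofHom (LinearMap.prodMap (F.map a).hom b.hom)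
  w := by
    apply ModuleCat.hom_ext
    apply LinearMap.ext
    intro x
    show (LinearMap.inl S (F.obj P₀) Q₀) ((F.map a).hom x)
        = (LinearMap.prodMap (F.map a).hom b.hom) (LinearMap.inl S (F.obj P₁) Q₁ x)
    simp

/-- The object `(M, 0)` of the comma category. -/
def leftObj (M : ModuleCat.{u} R) : Comma F (𝟭 (ModuleCat.{u} S)) where
  left := M
  right := ModuleCat.of S PUnit
  hom := 0

/-- The object `(0, N)` of the comma category. -/
def rightObj (N : ModuleCat.{u} S) : Comma F (𝟭 (ModuleCat.{u} S)) where
  left := ModuleCat.of R PUnit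
  right := N
  hom := 0

/-- The object `(M, FM)` of the comma category, with the identity structure map. -/
def diagObj (M : ModuleCat.{u} R) : Comma F (𝟭 (ModuleCat.{u} S)) where
  left := M
  right := F.obj M
  hom := 𝟙 (F.obj M)

end ModComma

theorem mem_dclass_iff_surjective {𝒜 : Type*} [Category 𝒜] {P₁ P₀ X : 𝒜} (σ : P₁ ⟶ P₀) :
    X ∈ Dclass σ ↔ Function.Surjective fun h : P₀ ⟶ X => σ ≫ h :=
  Iff.rfl

section PairObj

variable {R S : Type u} [Ring R] [Ring S] {F : ModuleCat.{u} R ⥤ ModuleCat.{u} S}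
  {P : ModuleCat.{u} R} {Q : ModuleCat.{u} S} {X : Comma F (𝟭 (ModuleCat.{u} S))}

variable (F P Q) in
def pairObjInr : Q ⟶ (pairObj F P Q).right :=
  ModuleCat.ofHom (LinearMap.inr S (F.obj P) Q)

theorem pairObjInr_comp_pairMap_right {P₁ P₀ : ModuleCat.{u} R} {Q₁ Q₀ : ModuleCat.{u} S}
    (a : P₁ ⟶ P₀) (b : Q₁ ⟶ Q₀) :
    pairObjInr F P₁ Q₁ ≫ (pairMap F a b).right = b ≫ pairObjInr F P₀ Q₀ := by
  ext q
  change ((F.map a).hom 0, b.hom q) = ((0 : F.obj P₀), b.hom q)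
  rw [map_zero]

def pairObjHomMk (g : P ⟶ X.left) (k : Q ⟶ X.right) : pairObj F P Q ⟶ X where
  left := g
  right := ModuleCat.ofHom ((F.map g ≫ X.hom).hom.coprod k.hom)
  w := by
    ext x
    simp [pairObj]

variable (F P Q X) in
/-- On `FP` the right component of a morphism out of `(P, FP ⊕ Q)` is forced by the
commutativity constraint, while on `Q` it is free. -/
def pairObjHomEquiv : (pairObj F P Q ⟶ X) ≃ (P ⟶ X.left) × (Q ⟶ X.right) where
  toFun f := (f.left, pairObjInr F P Q ≫ f.right)
  invFun gk := pairObjHomMk gk.1 gk.2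
  left_inv f := by
    apply CommaMorphism.ext
    · rfl
    · apply ModuleCat.hom_ext
      change (F.map f.left ≫ X.hom).hom.coprod (f.right.hom ∘ₗ LinearMap.inr S (F.obj P) Q) = _
      rw [f.w]
      exact LinearMap.coprod_comp_inl_inr f.right.hom
  right_inv gk := by
    refine Prod.ext rfl ?_
    ext q
    change (F.map gk.1 ≫ X.hom).hom.coprod gk.2.hom (0, q) = gk.2.hom q
    simp

theorem pairObjHomEquiv_pairMap_comp {P₁ P₀ : ModuleCat.{u} R} {Q₁ Q₀ : ModuleCat.{u} S}
    (a : P₁ ⟶ P₀) (b : Q₁ ⟶ Q₀) (f : pairObj F P₀ Q₀ ⟶ X) :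
    pairObjHomEquiv F P₁ Q₁ X (pairMap F a b ≫ f) =
      Prod.map (a ≫ ·) (b ≫ ·) (pairObjHomEquiv F P₀ Q₀ X f) := by
  refine Prod.ext rfl ?_
  change pairObjInr F P₁ Q₁ ≫ (pairMap F a b).right ≫ f.right = b ≫ pairObjInr F P₀ Q₀ ≫ f.right
  rw [← Category.assoc, pairObjInr_comp_pairMap_right, Category.assoc]

theorem mem_dclass_pairMap_iff {P₁ P₀ : ModuleCat.{u} R} {Q₁ Q₀ : ModuleCat.{u} S}
    (a : P₁ ⟶ P₀) (b : Q₁ ⟶ Q₀) :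
    X ∈ Dclass (pairMap F a b) ↔ X.left ∈ Dclass a ∧ X.right ∈ Dclass b := by
  rw [mem_dclass_iff_surjective, mem_dclass_iff_surjective, mem_dclass_iff_surjective,
    ← Prod.map_surjective, ← Equiv.comp_surjective _ (pairObjHomEquiv F P₁ Q₁ X),
    ← Equiv.surjective_comp (pairObjHomEquiv F P₀ Q₀ X)]
  exact Iff.of_eq (congrArg _ (funext (pairObjHomEquiv_pairMap_comp a b)))

end PairObj

theorem dclass_comma_iff_general {R S : Type u} [Ring R] [Ring S]
    (F : ModuleCat.{u} R ⥤ ModuleCat.{u} S)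
    {A : ModuleCat.{u} R} {B : ModuleCat.{u} S}
    (pA : ProjPres A) (pB : ProjPres B)
    (X : Comma F (𝟭 (ModuleCat.{u} S))) :
    X ∈ Dclass (pairMap F pA.σ pB.σ) ↔ X.left ∈ Dclass pA.σ ∧ X.right ∈ Dclass pB.σ :=
  mem_dclass_pairMap_iff pA.σ pB.σ

/-- Lemma: characterization of `D_σ` in the comma category.
Let `A` be a left `R`-module with projective presentation `σ_A : P₁ ⟶ P₀` and `B` a left
`S`-module with projective presentation `σ_B : Q₁ ⟶ Q₀`, and let `σ` be the induced projective
presentation of `(0,B) ⊕ (A,FA)` in the comma category `(F, S-Mod)`.  Then an object `(M,N)_h`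
of `(F, S-Mod)` belongs to `D_σ` if and only if `M ∈ D_{σ_A}` and `N ∈ D_{σ_B}`. -/
theorem dclass_comma_iff {R S : Type u} [Ring R] [Ring S]
    (F : ModuleCat.{u} R ⥤ ModuleCat.{u} S) [F.Additive] [PreservesFiniteColimits F]
    {A : ModuleCat.{u} R} {B : ModuleCat.{u} S}
    (pA : ProjPres A) (pB : ProjPres B)
    (X : Comma F (𝟭 (ModuleCat.{u} S))) :
    X ∈ Dclass (pairMap F pA.σ pB.σ) ↔ X.left ∈ Dclass pA.σ ∧ X.right ∈ Dclass pB.σ :=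
  dclass_comma_iff_general F pA pB X
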